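/- arXiv:1309.3962 — 3 statements merged into one kernel-verified Lean document; each statement's English description precedes it below -/
import Mathlib

section
/- Let Q be a d × d real matrix and π ∈ ℝ^d with Q𝟙 = 0, let Π = 𝟙πᵀ denote the d × d matrix whose rows all equal πᵀ, and suppose that exp(tQ) → Π as t → ∞ and that the matrix-valued function t ↦ exp(tQ) − Π is integrable on (0,∞). Define the deviation matrix D = ∫₀^∞ (exp(tQ) − Π) dt (entrywise). Then QD = Π − I, where I is the d × d identity matrix. -/
/-! Since the rows of `Q` sum to zero, `QΠ = 0`, so `QD = ∫₀^∞ Q exp(tQ) dt`. The integrand is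
the derivative of `exp(tQ)`, hence the integral is `lim_{t→∞} exp(tQ) − exp(0) = Π − I`. -/

open Matrix MeasureTheory Filter

attribute [local instance] Matrix.linftyOpNormedRing Matrix.linftyOpNormedAlgebra

section

variable {l m n : Type*} {α : Type*} [MeasurableSpace α] {μ : Measure α}

theorem Matrix.integrable_mul_apply [Fintype m] (A : Matrix l m ℝ) {F : α → Matrix m n ℝ}
    (hF : ∀ k j, Integrable (fun t => F t k j) μ) (i : l) (j : n) :
    Integrable (fun t => (A * F t) i j) μ := by
  simp only [mul_apply]
  exact integrable_finsetSum _ fun k _ => (hF k j).const_mul (A i k)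

theorem Matrix.mul_of_integral [Fintype m] (A : Matrix l m ℝ) {F : α → Matrix m n ℝ}
    (hF : ∀ k j, Integrable (fun t => F t k j) μ) :
    A * (of fun k j => ∫ t, F t k j ∂μ) = of fun i j => ∫ t, (A * F t) i j ∂μ := by
  ext i j
  simp only [mul_apply, of_apply]
  rw [integral_finsetSum _ fun k _ => (hF k j).const_mul (A i k)]
  exact Finset.sum_congr rfl fun k _ => (integral_const_mul _ _).symm

theorem Matrix.mul_of_const_rows_eq_zero {R : Type*} [NonAssocSemiring R] [Fintype n]
    (A : Matrix l n R) (π : m → R)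
    (hA : A *ᵥ (fun _ => 1) = 0) : A * (of fun (_ : n) j => π j) = 0 := by
  ext i j
  have hrow : ∑ k, A i k = 0 := by simpa [mulVec, dotProduct] using congrFun hA i
  simp only [mul_apply, of_apply, ← Finset.sum_mul, hrow, zero_mul, zero_apply]

end

section

variable {n : Type*} [Fintype n] [DecidableEq n]

theorem Matrix.hasDerivAt_exp_smul_apply (Q : Matrix n n ℝ) (i j : n) (t : ℝ) :
    HasDerivAt (fun u : ℝ => NormedSpace.exp (u • Q) i j)
      ((Q * NormedSpace.exp (t • Q)) i j) t :=
  (entryLinearMap ℝ ℝ i j).toContinuousLinearMap.hasFDerivAt.comp_hasDerivAt t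
    (hasDerivAt_exp_smul_const' Q t)

theorem Matrix.integral_Ioi_mul_exp_smul_apply (Q : Matrix n n ℝ) (i j : n) {p : ℝ}
    (hlim : Tendsto (fun t : ℝ => NormedSpace.exp (t • Q) i j) atTop (nhds p))
    (hint : IntegrableOn (fun t : ℝ => (Q * NormedSpace.exp (t • Q)) i j) (Set.Ioi 0)) :
    ∫ t in Set.Ioi (0 : ℝ), (Q * NormedSpace.exp (t • Q)) i j = p - (1 : Matrix n n ℝ) i j := by
  rw [integral_Ioi_of_hasDerivAt_of_tendsto' (fun t _ => hasDerivAt_exp_smul_apply Q i j t)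
    hint hlim, zero_smul, NormedSpace.exp_zero]

end

/-- For a generator `Q` with `Q𝟙 = 0`, limiting matrix `Π = 𝟙πᵀ` and deviation
matrix `D = ∫₀^∞ (exp(tQ) − Π) dt` (entrywise), one has `QD = Π − I`. -/
theorem generator_mul_deviation
    {d : ℕ} (Q : Matrix (Fin d) (Fin d) ℝ) (π : Fin d → ℝ)
    (hQ1 : Q.mulVec (fun _ => (1 : ℝ)) = 0)
    (Pim : Matrix (Fin d) (Fin d) ℝ) (hPim : Pim = Matrix.of fun _ j => π j)
    (hlim : ∀ i j, Tendsto (fun t : ℝ => NormedSpace.exp (t • Q) i j)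
      atTop (nhds (Pim i j)))
    (hint : ∀ i j, IntegrableOn
      (fun t : ℝ => NormedSpace.exp (t • Q) i j - Pim i j) (Set.Ioi 0))
    (D : Matrix (Fin d) (Fin d) ℝ)
    (hD : D = Matrix.of fun i j =>
      ∫ t in Set.Ioi (0 : ℝ), (NormedSpace.exp (t • Q) i j - Pim i j)) :
    Q * D = Pim - 1 := by
  have hQPim : Q * Pim = 0 := hPim ▸ mul_of_const_rows_eq_zero Q π hQ1
  have hQexp : ∀ t : ℝ, Q * (NormedSpace.exp (t • Q) - Pim) = Q * NormedSpace.exp (t • Q) := by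
    intro t
    rw [Matrix.mul_sub, hQPim, sub_zero]
  have hentry : ∀ k j, IntegrableOn
      (fun t : ℝ => (NormedSpace.exp (t • Q) - Pim) k j) (Set.Ioi 0) := hint
  ext i j
  calc (Q * D) i j
      = ∫ t in Set.Ioi (0 : ℝ), (Q * (NormedSpace.exp (t • Q) - Pim)) i j := by
        rw [hD]
        exact congrFun (congrFun (mul_of_integral Q hentry) i) j
    _ = ∫ t in Set.Ioi (0 : ℝ), (Q * NormedSpace.exp (t • Q)) i j := by simp only [hQexp]
    _ = (Pim - 1) i j :=
        integral_Ioi_mul_exp_smul_apply Q i j (hlim i j)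
          (by simpa only [IntegrableOn, hQexp] using integrable_mul_apply Q hentry i j)
end

section
/- Let Q, D be d × d real matrices and π ∈ ℝ^d satisfy: Q𝟙 = 0, πᵀQ = 0, QD = 𝟙πᵀ − I, and πᵀD = 0. Then for all indices i, j ∈ {1, …, d}: ∑_{k=1}^d ∑_{ℓ=1}^d π_k Q_{kℓ} (D_{ki} − D_{ℓi})(D_{kj} − D_{ℓj}) = π_i D_{ij} + π_j D_{ji}. -/
open Matrix Finset

/-- The algebraic identity identifying the limiting covariance matrix:
`∑_{k,ℓ} π_k Q_{kℓ} (D_{ki} − D_{ℓi})(D_{kj} − D_{ℓj}) = π_i D_{ij} + π_j D_{ji}`. -/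
theorem covariance_identity
    {d : ℕ} (Q D : Matrix (Fin d) (Fin d) ℝ) (π : Fin d → ℝ)
    (hQ1 : Q.mulVec (fun _ => (1 : ℝ)) = 0)
    (hπQ : Matrix.vecMul π Q = 0)
    (hQD : Q * D = (Matrix.of fun _ j => π j) - 1)
    (hπD : Matrix.vecMul π D = 0) :
    ∀ i j : Fin d,
      ∑ k : Fin d, ∑ l : Fin d,
          π k * Q k l * (D k i - D l i) * (D k j - D l j)
        = π i * D i j + π j * D j i := by
  intro i j
  have h1 : ∀ k, ∑ l, Q k l = 0 := fun k => by
    have := congrFun hQ1 k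
    simpa [Matrix.mulVec, dotProduct] using this
  have h2 : ∀ l, ∑ k, π k * Q k l = 0 := fun l => by
    have := congrFun hπQ l
    simpa [Matrix.vecMul, dotProduct] using this
  have h3 : ∀ k m, ∑ l, Q k l * D l m = π m - (if k = m then (1:ℝ) else 0) := fun k m => by
    have := congrFun (congrFun hQD k) m
    simpa [Matrix.mul_apply, Matrix.one_apply, Matrix.sub_apply] using this
  have h4 : ∀ m, ∑ k, π k * D k m = 0 := fun m => by
    have := congrFun hπD m
    simpa [Matrix.vecMul, dotProduct] using this
  have key : ∀ k, (∑ l, π k * Q k l * (D k i - D l i) * (D k j - D l j))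
      = π k * D k i * D k j * (∑ l, Q k l)
        - π k * D k i * (∑ l, Q k l * D l j)
        - π k * D k j * (∑ l, Q k l * D l i)
        + π k * ∑ l, Q k l * (D l i * D l j) := by
    intro k
    simp only [Finset.mul_sum]
    rw [← Finset.sum_sub_distrib, ← Finset.sum_sub_distrib, ← Finset.sum_add_distrib]
    exact Finset.sum_congr rfl fun l _ => by ring
  have hswap : ∑ k, π k * ∑ l, Q k l * (D l i * D l j) = 0 := by
    calc ∑ k, π k * ∑ l, Q k l * (D l i * D l j)
        = ∑ l, (∑ k, π k * Q k l) * (D l i * D l j) := by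
          simp only [Finset.mul_sum, Finset.sum_mul]
          rw [Finset.sum_comm]
          exact Finset.sum_congr rfl fun l _ => Finset.sum_congr rfl fun k _ => by ring
      _ = 0 := by simp [h2]
  calc ∑ k, ∑ l, π k * Q k l * (D k i - D l i) * (D k j - D l j)
      = ∑ k, (π k * D k i * D k j * (0:ℝ)
          - π k * D k i * (π j - if k = j then (1:ℝ) else 0)
          - π k * D k j * (π i - if k = i then (1:ℝ) else 0)
          + π k * ∑ l, Q k l * (D l i * D l j)) := by
        refine Finset.sum_congr rfl fun k _ => ?_
        rw [key k, h1 k, h3 k j, h3 k i]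
    _ = (∑ k, (π k * D k i * D k j * (0:ℝ)
          - π k * D k i * (π j - if k = j then (1:ℝ) else 0)
          - π k * D k j * (π i - if k = i then (1:ℝ) else 0)))
          + ∑ k, π k * ∑ l, Q k l * (D l i * D l j) := by
        rw [← Finset.sum_add_distrib]
    _ = ∑ k, (π k * D k i * D k j * (0:ℝ)
          - π k * D k i * (π j - if k = j then (1:ℝ) else 0)
          - π k * D k j * (π i - if k = i then (1:ℝ) else 0)) := by
        rw [hswap, add_zero]
    _ = ∑ k, ((if k = j then π k * D k i else 0)
          + (if k = i then π k * D k j else 0)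
          - (π k * D k i) * π j - (π k * D k j) * π i) := by
        refine Finset.sum_congr rfl fun k _ => ?_
        split_ifs <;> ring
    _ = π i * D i j + π j * D j i := by
        simp only [Finset.sum_sub_distrib, Finset.sum_add_distrib,
          Finset.sum_ite_eq', Finset.mem_univ, if_true, ← Finset.sum_mul, h4]
        ring
end

section
/- Let q₁, q₂ > 0, q̄ = q₁ + q₂, let Q be the 2 × 2 matrix with rows (−q₁, q₁) and (q₂, −q₂), and let π = (q₂/q̄, q₁/q̄). Then for all i, j ∈ {1, 2}, the integral D_{ij} = ∫₀^∞ ((exp(tQ))_{ij} − π_j) dt converges and D = (1/q̄²) · [[q₁, −q₁], [−q₂, q₂]]. -/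
/-!
Write `E = q̄⁻¹ • [[q₁, −q₁], [−q₂, q₂]]`. Then `E` is idempotent, `Q = −q̄ • E`, and both rows of
`1 − E` equal `π`. For an idempotent the exponential series collapses, so
`exp (tQ) = (1 − E) + e^{−q̄t} • E`, i.e. `p_{ij}(t) − π_j = e^{−q̄t} E_{ij}`, which is integrable on
`(0, ∞)` with integral `E_{ij} / q̄`.
-/

open Matrix MeasureTheory

theorem NormedSpace.exp_smul_of_isIdempotentElem {A : Type*} [Ring A] [Algebra ℝ A]
    [TopologicalSpace A] [IsTopologicalRing A] [ContinuousSMul ℝ A] [T2Space A]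
    {E : A} (hE : IsIdempotentElem E) (s : ℝ) :
    NormedSpace.exp (s • E) = (1 - E) + Real.exp s • E := by
  have hterm : ∀ n : ℕ, ((n.factorial : ℝ)⁻¹) • (s • E) ^ n
      = (if n = 0 then 1 - E else 0) + (s ^ n / n.factorial) • E := by
    rintro (_ | n)
    · simp
    · rw [smul_pow, hE.pow_succ_eq, smul_smul, if_neg n.succ_ne_zero, zero_add, inv_mul_eq_div]
  have hsum := (hasSum_ite_eq 0 (1 - E)).add
    ((Real.exp_eq_exp_ℝ ▸ NormedSpace.expSeries_div_hasSum_exp s).smul_const E)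
  rw [NormedSpace.exp_eq_tsum ℝ, ← hsum.tsum_eq]
  exact tsum_congr hterm

theorem isIdempotentElem_inv_add_smul_twoState {K : Type*} [Field K] {a b : K} (h : a + b ≠ 0) :
    IsIdempotentElem ((a + b)⁻¹ • !![a, -a; -b, b]) := by
  have hsq : !![a, -a; -b, b] * !![a, -a; -b, b] = (a + b) • !![a, -a; -b, b] := by
    ext i j; fin_cases i <;> fin_cases j <;> simp <;> ring
  rw [IsIdempotentElem, smul_mul_smul_comm, hsq, smul_smul, mul_assoc, inv_mul_cancel₀ h, mul_one]

/-- The deviation matrix of the two-state Markov chain: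
`D = (1/q̄²)·[[q₁, −q₁], [−q₂, q₂]]`, where `D_{ij} = ∫₀^∞ (p_{ij}(t) − π_j) dt`. -/
theorem two_state_deviation_matrix
    (q₁ q₂ : ℝ) (hq₁ : 0 < q₁) (hq₂ : 0 < q₂)
    (qb : ℝ) (hqb : qb = q₁ + q₂)
    (Q : Matrix (Fin 2) (Fin 2) ℝ) (hQ : Q = !![-q₁, q₁; q₂, -q₂])
    (π : Fin 2 → ℝ) (hπ : π = ![q₂ / qb, q₁ / qb]) :
    (∀ i j : Fin 2, IntegrableOn
        (fun t : ℝ => NormedSpace.exp (t • Q) i j - π j) (Set.Ioi 0)) ∧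
    (Matrix.of fun i j : Fin 2 =>
        ∫ t in Set.Ioi (0 : ℝ), (NormedSpace.exp (t • Q) i j - π j))
      = (1 / qb ^ 2) • !![q₁, -q₁; -q₂, q₂] := by
  have hqb_pos : 0 < qb := hqb ▸ add_pos hq₁ hq₂
  have hE : IsIdempotentElem (qb⁻¹ • !![q₁, -q₁; -q₂, q₂]) :=
    hqb ▸ isIdempotentElem_inv_add_smul_twoState (hqb ▸ hqb_pos.ne')
  set E := qb⁻¹ • !![q₁, -q₁; -q₂, q₂]
  have hQE : Q = -qb • E := by
    rw [hQ, smul_smul, neg_mul, mul_inv_cancel₀ hqb_pos.ne', neg_smul, one_smul]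
    ext i j; fin_cases i <;> fin_cases j <;> simp
  have hπE : ∀ i j, (1 - E) i j = π j := by
    subst hπ hqb
    intro i j; fin_cases i <;> fin_cases j <;> simp [E] <;> field_simp <;> ring
  have hdev : ∀ (t : ℝ) i j, NormedSpace.exp (t • Q) i j - π j = Real.exp (-qb * t) * E i j := by
    intro t i j
    rw [hQE, smul_smul, NormedSpace.exp_smul_of_isIdempotentElem hE, Matrix.add_apply, hπE,
      Matrix.smul_apply, smul_eq_mul, mul_comm t]
    ring
  simp_rw [hdev]
  refine ⟨fun i j => (exp_neg_integrableOn_Ioi 0 hqb_pos).mul_const _, ?_⟩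
  ext i j
  rw [of_apply, integral_mul_const, integral_exp_mul_Ioi (neg_neg_of_pos hqb_pos)]
  simp only [E, Matrix.smul_apply, smul_eq_mul, mul_zero, Real.exp_zero]
  field_simp
end
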